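/- arXiv:2009.01568 — 2 statements merged into one kernel-verified Lean document; each statement's English description precedes it below -/
import Mathlib

section
/- Let Σ ⊆ Aut(G) act arc-transitively and let v : V → ℝ^d be a Σ-realization of full local dimension, i.e., span{v_j − vᵢ : j ∈ N(i)} = ℝ^d for all i. Then Fix(T, Σᵢ) = span{vᵢ} for each vertex i with vᵢ ≠ 0, where T is the representation of v. -/
open Matrix

lemma orth_dot {d : ℕ} (A : Matrix.orthogonalGroup (Fin d) ℝ) (x y : Fin d → ℝ) :
    ((A : Matrix (Fin d) (Fin d) ℝ) *ᵥ x) ⬝ᵥ ((A : Matrix (Fin d) (Fin d) ℝ) *ᵥ y) = x ⬝ᵥ y := by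
  have h : (A : Matrix (Fin d) (Fin d) ℝ)ᵀ * A = 1 := A.prop.1
  rw [Matrix.dotProduct_mulVec, Matrix.vecMul_mulVec, h, Matrix.vecMul_one]



/-- `Fix(T, S)`: the subspace of vectors fixed by `T_σ` for all `σ ∈ S`. -/
def fixSpace {Γ : Type*} [Group Γ] {d : ℕ}
    (T : Γ →* Matrix.orthogonalGroup (Fin d) ℝ) (S : Set Γ) :
    Submodule ℝ (Fin d → ℝ) where
  carrier := {x | ∀ σ ∈ S, ((T σ : Matrix (Fin d) (Fin d) ℝ)).mulVec x = x}
  add_mem' := by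
    intro a b ha hb σ hσ
    simp [Matrix.mulVec_add, ha σ hσ, hb σ hσ]
  zero_mem' := by
    intro σ hσ
    simp
  smul_mem' := by
    intro c x hx σ hσ
    simp [Matrix.mulVec_smul, hx σ hσ]

/-- For an arc-transitive `Σ`-realization `v` of full local dimension (the edge
directions at every vertex span `ℝ^d`), the fixed space of the stabilizer of a
vertex `i` with `vᵢ ≠ 0` is exactly `span{vᵢ}`. -/
theorem stmt_13 {V : Type*} (G : SimpleGraph V) (Γ : Type*) [Group Γ]
    (ρ : Γ →* Equiv.Perm V)
    (d : ℕ) (T : Γ →* Matrix.orthogonalGroup (Fin d) ℝ)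
    (v : V → Fin d → ℝ)
    (hreal : ∀ (σ : Γ) (i : V),
      ((T σ : Matrix (Fin d) (Fin d) ℝ)).mulVec (v i) = v (ρ σ i))
    (harc : ∀ i j k : V, G.Adj i j → G.Adj i k →
      ∃ σ : Γ, ρ σ i = i ∧ ρ σ j = k)
    (hfull : ∀ i : V,
      Submodule.span ℝ {w : Fin d → ℝ | ∃ j, G.Adj i j ∧ w = v j - v i} = ⊤) :
    ∀ i : V, v i ≠ 0 →
      fixSpace T {σ : Γ | ρ σ i = i} = Submodule.span ℝ {v i} := by
  intro i hvi
  have hne : ∃ j₀, G.Adj i j₀ := by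
    by_contra h
    push_neg at h
    have hempty : {w : Fin d → ℝ | ∃ j, G.Adj i j ∧ w = v j - v i} = ∅ := by
      ext w; simp only [Set.mem_setOf_eq, Set.mem_empty_iff_false, iff_false]
      rintro ⟨j, hj, -⟩; exact h j hj
    have h2 := hfull i
    rw [hempty, Submodule.span_empty] at h2
    have : v i ∈ (⊥ : Submodule ℝ (Fin d → ℝ)) := h2.symm ▸ Submodule.mem_top
    exact hvi ((Submodule.mem_bot ℝ).mp this)
  obtain ⟨j₀, hj₀⟩ := hne
  have key : ∀ x : Fin d → ℝ, x ∈ fixSpace T {σ : Γ | ρ σ i = i} →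
      ∀ j, G.Adj i j → x ⬝ᵥ v j = x ⬝ᵥ v j₀ := by
    intro x hx j hj
    obtain ⟨σ, hσi, hσj⟩ := harc i j j₀ hj hj₀
    have hfix : ((T σ : Matrix (Fin d) (Fin d) ℝ)) *ᵥ x = x := hx σ hσi
    calc x ⬝ᵥ v j = ((T σ : Matrix (Fin d) (Fin d) ℝ) *ᵥ x) ⬝ᵥ
          ((T σ : Matrix (Fin d) (Fin d) ℝ) *ᵥ v j) := (orth_dot (T σ) x (v j)).symm
      _ = x ⬝ᵥ v j₀ := by rw [hfix, hreal, hσj]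
  have hvifix : v i ∈ fixSpace T {σ : Γ | ρ σ i = i} := by
    intro σ hσ
    rw [hreal σ i, hσ]
  have tool : ∀ y : Fin d → ℝ,
      (∀ j, G.Adj i j → y ⬝ᵥ (v j - v i) = 0) → y = 0 := by
    intro y hy
    have hall : ∀ w : Fin d → ℝ, y ⬝ᵥ w = 0 := by
      intro w
      have hw : w ∈ Submodule.span ℝ {w : Fin d → ℝ | ∃ j, G.Adj i j ∧ w = v j - v i} := by
        rw [hfull i]; exact Submodule.mem_top
      refine Submodule.span_induction ?_ ?_ ?_ ?_ hw
      · rintro w ⟨j, hj, rfl⟩; exact hy j hj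
      · simp
      · intro a b _ _ ha hb; rw [dotProduct_add, ha, hb, add_zero]
      · intro c a _ ha; rw [dotProduct_smul, ha, smul_zero]
    have := hall y
    rwa [dotProduct_self_eq_zero] at this
  have hbne : v i ⬝ᵥ (v j₀ - v i) ≠ 0 := by
    intro h0
    apply hvi
    apply tool
    intro j hj
    rw [dotProduct_sub] at h0 ⊢
    rw [key (v i) hvifix j hj]
    linarith
  apply le_antisymm
  · intro x hx
    have hy : x - ((x ⬝ᵥ (v j₀ - v i)) / (v i ⬝ᵥ (v j₀ - v i))) • v i = 0 := by
      apply tool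
      intro j hj
      simp only [sub_dotProduct, smul_dotProduct, dotProduct_sub,
        key x hx j hj, key (v i) hvifix j hj, smul_eq_mul]
      have hb' := hbne
      rw [dotProduct_sub] at hb'
      field_simp [hb']
      ring
    rw [Submodule.mem_span_singleton]
    exact ⟨(x ⬝ᵥ (v j₀ - v i)) / (v i ⬝ᵥ (v j₀ - v i)), (sub_eq_zero.mp hy).symm⟩
  · rw [Submodule.span_le]
    intro w hw
    rw [Set.mem_singleton_iff] at hw
    subst hw
    exact hvifix
end

section
/- Let T : Σ → O(d) be an orthogonal representation, U, U' ⊆ ℝ^d T-invariant subspaces with U' irreducible and U not orthogonal to U'. Then the orthogonal projection π_U(U') is a T-irreducible invariant subspace of dimension dim U'. -/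
/-!
Every `T σ` is an isometry mapping `U` onto itself, so the orthogonal projection `π_U` commutes
with the representation. Restricted to `U'` it is therefore an equivariant map out of an
irreducible subspace; by Schur's argument its kernel, an invariant subspace of `U'`, is
`0` or `U'`, and it cannot be `U'` as `U'` is not orthogonal to `U`. The image of an irreducible
subspace under an equivariant map injective on it is again irreducible, of the same dimension.
-/

open RealInnerProductSpace

namespace Submodule

section Representation

variable {R M ι : Type*} [Ring R] [AddCommGroup M] [Module R M]

def IsInvariant (ρ : ι → Module.End R M) (W : Submodule R M) : Prop :=
  ∀ i, ∀ x ∈ W, ρ i x ∈ W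

def IsIrreducible (ρ : ι → Module.End R M) (W : Submodule R M) : Prop :=
  W ≠ ⊥ ∧ ∀ W' ≤ W, W'.IsInvariant ρ → W' = ⊥ ∨ W' = W

variable {ρ : ι → Module.End R M} {W W' : Submodule R M} {f : Module.End R M}

theorem map_inf_comap_eq {N : Type*} [AddCommGroup N] [Module R N] (f : M →ₗ[R] N)
    (W : Submodule R M) (W' : Submodule R N) :
    (W ⊓ W'.comap f).map f = W.map f ⊓ W' :=
  SetLike.coe_injective (by simp only [map_coe, coe_inf, comap_coe, Set.image_inter_preimage])

theorem IsInvariant.inf (hW : W.IsInvariant ρ) (hW' : W'.IsInvariant ρ) :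
    (W ⊓ W').IsInvariant ρ :=
  fun i x hx => ⟨hW i x hx.1, hW' i x hx.2⟩

theorem IsInvariant.map (hW : W.IsInvariant ρ) (hf : ∀ i, Commute f (ρ i)) :
    (W.map f).IsInvariant ρ := by
  rintro i _ ⟨x, hx, rfl⟩
  exact ⟨ρ i x, hW i x hx, LinearMap.congr_fun (hf i) x⟩

theorem IsInvariant.comap (hW : W.IsInvariant ρ) (hf : ∀ i, Commute f (ρ i)) :
    (W.comap f).IsInvariant ρ := by
  intro i x hx
  rw [mem_comap, ← Module.End.mul_apply, (hf i).eq]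
  exact hW i (f x) hx

theorem isInvariant_ker (hf : ∀ i, Commute f (ρ i)) : (LinearMap.ker f).IsInvariant ρ :=
  fun i x hx => by
    rw [LinearMap.mem_ker, ← Module.End.mul_apply, hf i, Module.End.mul_apply, hx, map_zero]

theorem IsIrreducible.disjoint_ker (hW : W.IsIrreducible ρ) (hWinv : W.IsInvariant ρ)
    (hf : ∀ i, Commute f (ρ i)) (hfW : ¬ W ≤ LinearMap.ker f) :
    Disjoint W (LinearMap.ker f) := by
  rcases hW.2 _ inf_le_left (hWinv.inf (isInvariant_ker hf)) with h | h
  · exact disjoint_iff.mpr h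
  · exact absurd (inf_eq_left.mp h) hfW

theorem IsIrreducible.map (hW : W.IsIrreducible ρ) (hWinv : W.IsInvariant ρ)
    (hf : ∀ i, Commute f (ρ i)) (hfW : Disjoint W (LinearMap.ker f)) :
    (W.map f).IsIrreducible ρ := by
  refine ⟨fun h => hW.1 (hfW.eq_bot_of_le (LinearMap.le_ker_iff_map.mpr h)),
    fun W' hW' hW'inv => ?_⟩
  have hW'eq : W' = (W ⊓ W'.comap f).map f := by
    rw [map_inf_comap_eq, inf_eq_right.mpr hW']
  rcases hW.2 _ inf_le_left (hWinv.inf (hW'inv.comap hf)) with h | h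
  · exact Or.inl (by rw [hW'eq, h, Submodule.map_bot])
  · exact Or.inr (by rw [hW'eq, h])

theorem finrank_map_eq_of_disjoint_ker {K V V₂ : Type*} [DivisionRing K] [AddCommGroup V]
    [Module K V] [AddCommGroup V₂] [Module K V₂] {W : Submodule K V} {f : V →ₗ[K] V₂}
    (hfW : Disjoint W (LinearMap.ker f)) :
    Module.finrank K (W.map f) = Module.finrank K W := by
  have hinj : Function.Injective (f ∘ₗ W.subtype) := by
    rw [← LinearMap.ker_eq_bot, LinearMap.ker_comp, ← disjoint_iff_comap_eq_bot]
    exact hfW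
  rw [(LinearEquiv.ofInjective _ hinj).finrank_eq, LinearMap.range_comp, range_subtype]

end Representation

section Orthogonal

variable {𝕜 E Γ : Type*} [RCLike 𝕜] [NormedAddCommGroup E] [InnerProductSpace 𝕜 E] [Group Γ]
  {T : Γ →* (E ≃ₗᵢ[𝕜] E)} {U : Submodule 𝕜 E}

theorem map_eq_of_isInvariant (hU : U.IsInvariant fun σ => (T σ).toLinearEquiv.toLinearMap)
    (σ : Γ) : U.map (T σ).toLinearEquiv.toLinearMap = U := by
  refine le_antisymm (map_le_iff_le_comap.mpr (hU σ)) fun x hx =>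
    ⟨T σ⁻¹ x, hU σ⁻¹ x hx, ?_⟩
  simp [map_inv, LinearIsometryEquiv.coe_inv]

theorem commute_starProjection [U.HasOrthogonalProjection]
    (hU : U.IsInvariant fun σ => (T σ).toLinearEquiv.toLinearMap) (σ : Γ) :
    Commute (U.starProjection : Module.End 𝕜 E) (T σ).toLinearEquiv.toLinearMap := by
  refine LinearMap.ext fun x => ?_
  have h := starProjection_map_apply (T σ) U (T σ x)
  simp only [map_eq_of_isInvariant hU σ, LinearIsometryEquiv.symm_apply_apply] at h
  exact h

theorem not_le_ker_starProjection [U.HasOrthogonalProjection] {U' : Submodule 𝕜 E}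
    (h : ∃ u ∈ U, ∃ u' ∈ U', inner 𝕜 u u' ≠ 0) :
    ¬ U' ≤ LinearMap.ker (U.starProjection : Module.End 𝕜 E) := by
  obtain ⟨u, hu, u', hu', hne⟩ := h
  intro hle
  exact hne (inner_right_of_mem_orthogonal hu ((starProjection_apply_eq_zero_iff U).mp (hle hu')))

end Orthogonal

end Submodule

/-- If `U, U'` are invariant subspaces of an orthogonal representation, `U'`
irreducible and not orthogonal to `U`, then the orthogonal projection
`π_U(U')` is an irreducible invariant subspace of dimension `dim U'`. -/
theorem stmt_18 {E : Type*} [NormedAddCommGroup E] [InnerProductSpace ℝ E]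
    [FiniteDimensional ℝ E]
    {Γ : Type*} [Group Γ] (T : Γ →* (E ≃ₗᵢ[ℝ] E))
    (U U' : Submodule ℝ E)
    (hU : ∀ σ : Γ, ∀ x ∈ U, T σ x ∈ U)
    (hU' : ∀ σ : Γ, ∀ x ∈ U', T σ x ∈ U')
    (hU'ne : U' ≠ ⊥)
    (hU'irr : ∀ W : Submodule ℝ E, W ≤ U' →
      (∀ σ : Γ, ∀ x ∈ W, T σ x ∈ W) → W = ⊥ ∨ W = U')
    (hno : ∃ u ∈ U, ∃ u' ∈ U', ⟪u, u'⟫ ≠ 0) :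
    ∀ W : Submodule ℝ E,
      W = Submodule.map (U.subtype ∘ₗ (U.orthogonalProjection).toLinearMap) U' →
        (∀ σ : Γ, ∀ x ∈ W, T σ x ∈ W) ∧ W ≠ ⊥ ∧
          (∀ W' : Submodule ℝ E, W' ≤ W →
            (∀ σ : Γ, ∀ x ∈ W', T σ x ∈ W') → W' = ⊥ ∨ W' = W) ∧
          Module.finrank ℝ W = Module.finrank ℝ U' := by
  rintro W rfl
  let ρ : Γ → Module.End ℝ E := fun σ => (T σ).toLinearEquiv.toLinearMap
  have hinv : U'.IsInvariant ρ := hU'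
  have hirr : U'.IsIrreducible ρ := ⟨hU'ne, hU'irr⟩
  have hcomm := U.commute_starProjection (T := T) hU
  have hdisj := hirr.disjoint_ker hinv hcomm (U.not_le_ker_starProjection hno)
  obtain ⟨hne, hsub⟩ := hirr.map hinv hcomm hdisj
  exact ⟨hinv.map hcomm, hne, hsub, Submodule.finrank_map_eq_of_disjoint_ker hdisj⟩
end
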